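/- arXiv:1912.05565 — 4 statements merged into one kernel-verified Lean document; each statement's English description precedes it below -/
import Mathlib

section
/- Let U be a controlled unitary U = Σ_z Π_z ⊗ V(z) as above, with conjugation by U a QCA of range R, and let S be a union of tiles and T a tile disjoint from S. Then conjugation by U_{S∪T} is also a QCA of range R. -/
/-!
STATEMENT 2: with `U = Σ_z Π_z ⊗ V(z)` a controlled unitary whose conjugation is a QCA of
range `R` (defined, per Lemma `uqca`, by the two conditions on `(V_z)† V_{z+i}`), and `S` a
union of tiles and `T` a tile disjoint from `S`, conjugation by `U_{S∪T}` is also a QCA of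
range `R` (i.e. the restricted family `z ↦ V(z_{S∪T})` satisfies the same two conditions).
-/
noncomputable section

open Matrix

/-- operators on a collection `K` of qubits -/
abbrev Op (K : Type*) [Fintype K] [DecidableEq K] : Type _ :=
  Matrix (K → Bool) (K → Bool) ℂ

/-- `O` is supported on the region `T` -/
def SupportedOn {K : Type*} [Fintype K] [DecidableEq K] (O : Op K) (T : Set K) : Prop :=
  (∀ a b : K → Bool, O a b ≠ 0 → ∀ k ∉ T, a k = b k) ∧
  (∀ a b a' b' : K → Bool, (∀ k ∈ T, a k = a' k) → (∀ k ∈ T, b k = b' k) →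
    (∀ k ∉ T, a k = b k) → (∀ k ∉ T, a' k = b' k) → O a b = O a' b')

/-- conjugation by the unitary `U` is a quantum cellular automaton of range `R`
with respect to the distance function `d` -/
def IsQCA {K : Type*} [Fintype K] [DecidableEq K] (d : K → K → ℝ) (U : Op K) (R : ℝ) : Prop :=
  U ∈ unitary (Op K) ∧
  ∀ k : K, ∀ O : Op K, SupportedOn O {k} →
    SupportedOn (star U * O * U) {k' : K | d k k' ≤ R}
variable {S Mi : Type*} [Fintype S] [DecidableEq S] [Fintype Mi] [DecidableEq Mi]

/-- the controlled unitary `Σ_z Π^spin_z ⊗ V_z` on spins (`S`) and material (`Mi`) -/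
def controlled (V : (S → Bool) → Op Mi) : Op (S ⊕ Mi) :=
  fun a b => if (fun s => a (Sum.inl s)) = (fun s => b (Sum.inl s))
    then V (fun s => a (Sum.inl s)) (fun m => a (Sum.inr m)) (fun m => b (Sum.inr m))
    else 0

/-- the spin configuration `z + i`: flip spin `i` in `z` -/
def flipAt {S : Type*} [DecidableEq S] (z : S → Bool) (i : S) : S → Bool :=
  Function.update z i (!(z i))

open scoped Classical in
/-- the configuration `z_A`, agreeing with `z` on `A` and equal to `+1` (true) off `A` -/
def restrictTo {S : Type*} (A : Set S) (z : S → Bool) : S → Bool :=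
  fun s => if s ∈ A then z s else true

/-- the two conditions of Lemma `uqca` defining "conjugation by the controlled unitary
`Σ_z Π_z ⊗ V_z` is a QCA of range `R`" -/
def ControlledConds {S Mi : Type*} [Fintype S] [DecidableEq S] [Fintype Mi] [DecidableEq Mi]
    (d : (S ⊕ Mi) → (S ⊕ Mi) → ℝ) (R : ℝ) (V : (S → Bool) → Op Mi) : Prop :=
  (∀ z, V z ∈ unitary (Op Mi)) ∧
  ∀ (z : S → Bool) (i : S),
    SupportedOn (star (V z) * V (flipAt z i))
      {m : Mi | d (Sum.inl i) (Sum.inr m) ≤ R} ∧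
    ∀ j : S, R < d (Sum.inl i) (Sum.inl j) →
      star (V z) * V (flipAt z i) =
        star (V (flipAt z j)) * V (flipAt (flipAt z i) j)

lemma restrictTo_flipAt_of_mem {α : Type*} [DecidableEq α] {A : Set α} {i : α} (hi : i ∈ A)
    (z : α → Bool) : restrictTo A (flipAt z i) = flipAt (restrictTo A z) i := by
  funext s
  by_cases hs : s = i
  · subst hs
    simp [restrictTo, flipAt, hi]
  · simp [restrictTo, flipAt, Function.update_of_ne hs]

lemma restrictTo_flipAt_of_notMem {α : Type*} [DecidableEq α] {A : Set α} {i : α} (hi : i ∉ A)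
    (z : α → Bool) : restrictTo A (flipAt z i) = restrictTo A z := by
  funext s
  by_cases hs : s = i
  · subst hs
    simp [restrictTo, hi]
  · simp [restrictTo, flipAt, Function.update_of_ne hs]

lemma supportedOn_one {K : Type*} [Fintype K] [DecidableEq K] (T : Set K) :
    SupportedOn (1 : Op K) T := by
  refine ⟨fun a b hab k _ => ?_, fun a b a' b' hT hT' hout hout' => ?_⟩
  · by_contra hk
    exact hab (Matrix.one_apply_ne fun e => hk (congrFun e k))
  · have hdiag : a = b ↔ a' = b' := by
      constructor
      · rintro rfl
        funext k
        by_cases hk : k ∈ T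
        · rw [← hT k hk, ← hT' k hk]
        · exact hout' k hk
      · rintro rfl
        funext k
        by_cases hk : k ∈ T
        · rw [hT k hk, hT' k hk]
        · exact hout k hk
    simp only [Matrix.one_apply, hdiag]

/-- A flip inside `A` commutes with restriction to `A`, so both conditions are inherited from
`V`; a flip outside `A` is invisible after restriction, so `(V_z)† V_{z+i} = 1`. -/
lemma controlledConds_restrictTo {d : (S ⊕ Mi) → (S ⊕ Mi) → ℝ} {R : ℝ}
    {V : (S → Bool) → Op Mi} (hV : ControlledConds d R V) (A : Set S) :
    ControlledConds d R (fun z => V (restrictTo A z)) := by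
  obtain ⟨hunit, hflip⟩ := hV
  have hcancel : ∀ w, star (V w) * V w = 1 := fun w => Unitary.star_mul_self_of_mem (hunit w)
  refine ⟨fun z => hunit _, fun z i => ?_⟩
  by_cases hi : i ∈ A
  · simp only [restrictTo_flipAt_of_mem hi]
    refine ⟨(hflip _ i).1, fun j hj => ?_⟩
    by_cases hjA : j ∈ A
    · simpa only [restrictTo_flipAt_of_mem hjA, restrictTo_flipAt_of_mem hi] using
        (hflip _ i).2 j hj
    · simp only [restrictTo_flipAt_of_notMem hjA, restrictTo_flipAt_of_mem hi]
  · simp only [restrictTo_flipAt_of_notMem hi, hcancel]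
    refine ⟨supportedOn_one _, fun j _ => ?_⟩
    by_cases hjA : j ∈ A
    · simp only [restrictTo_flipAt_of_mem hjA, restrictTo_flipAt_of_notMem hi, hcancel]
    · simp only [restrictTo_flipAt_of_notMem hjA, restrictTo_flipAt_of_notMem hi, hcancel]

theorem stmt_2_general
    {Tile : Type*}
    (d : (S ⊕ Mi) → (S ⊕ Mi) → ℝ) (R : ℝ)
    (V : (S → Bool) → Op Mi)
    (hconds : ControlledConds d R V)
    (tile : Tile → Set S) :
    ∀ (𝒮 : Set Tile) (T : Tile), T ∉ 𝒮 →
      ControlledConds d R (fun z => V (restrictTo (⋃ t ∈ (𝒮 ∪ {T}), tile t) z)) :=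
  fun _ _ _ => controlledConds_restrictTo hconds _

theorem stmt_2
    {Tile : Type*}
    (d : (S ⊕ Mi) → (S ⊕ Mi) → ℝ) (R : ℝ) (hR : 0 < R)
    (V : (S → Bool) → Op Mi)
    (hconds : ControlledConds d R V)
    (tile : Tile → Set S)
    (hpart : ∀ s : S, ∃! t : Tile, s ∈ tile t) :
    ∀ (𝒮 : Set Tile) (T : Tile), T ∉ 𝒮 →
      ControlledConds d R (fun z => V (restrictTo (⋃ t ∈ (𝒮 ∪ {T}), tile t) z)) :=
  stmt_2_general d R V hconds tile

end
end

section
/- With the global phase of each three-fermion Walker–Wang ground state Ψ(M) fixed by the positive-vacuum rule ⟨0|Ψ(M)⟩ > 0, the overlap of the ground states on any two 3-manifolds M, M' embedded in a common ambient complex satisfies ⟨Ψ(M)|Ψ(M')⟩ > 0. -/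
theorem mul_nonneg_of_ne_zero_imp_eq {R : Type*} [Ring R] [LinearOrder R] [IsStrictOrderedRing R]
    {a b u : R} (h : a ≠ 0 → b ≠ 0 → a = u ∧ b = u) : 0 ≤ a * b := by
  by_cases ha : a = 0
  · simp [ha]
  by_cases hb : b = 0
  · simp [hb]
  obtain ⟨rfl, rfl⟩ := h ha hb
  exact mul_self_nonneg _

theorem stmt_8_general {Conf : Type*} [Fintype Conf] (vac : Conf)
    (ψ ψ' ψu : Conf → ℝ)
    (hvac : 0 < ψ vac) (hvac' : 0 < ψ' vac)
    (hkey : ∀ s, ψ s ≠ 0 → ψ' s ≠ 0 → ψ s = ψu s ∧ ψ' s = ψu s) :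
    0 < ∑ s, ψ s * ψ' s :=
  Finset.sum_pos' (fun s _ => mul_nonneg_of_ne_zero_imp_eq (hkey s))
    ⟨vac, Finset.mem_univ vac, mul_pos hvac hvac'⟩

theorem stmt_8 {Conf : Type*} [Fintype Conf] (vac : Conf)
    (ψ ψ' ψu : Conf → ℝ)
    (hval : ∀ s, ψ s = 0 ∨ ψ s = 1 ∨ ψ s = -1)
    (hval' : ∀ s, ψ' s = 0 ∨ ψ' s = 1 ∨ ψ' s = -1)
    (hvac : 0 < ψ vac) (hvac' : 0 < ψ' vac)
    (hkey : ∀ s, ψ s ≠ 0 → ψ' s ≠ 0 → ψ s = ψu s ∧ ψ' s = ψu s) :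
    0 < ∑ s, ψ s * ψ' s :=
  stmt_8_general vac ψ ψ' ψu hvac hvac' hkey
end

section
/- On a lattice of qubits, let A be a group of finitely supported Pauli operators that is invariant under translation along a 1-dimensional direction and is the commutant (within the Pauli group, modulo phases) of a locally generated algebra. If C is a Clifford circuit such that C A C† is generated by single-qubit Z operators and two-qubit Z⊗Z operators, then whenever Z_x Z_{x+c} ∈ C A C† with c ≠ 0 and translation invariance gives Z_x Z_{x+nc} ∈ C A C† for all integers n, one must in fact have the single-qubit operator Z_x ∈ C A C†. -/
/-!
If `s` anticommutes with `Z_x`, then, since `Z_x Z_{x+nc}` commutes with `s`, it anticommutes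
with `Z_{x+nc}` as well, so both `x` and `x + nc` lie in the support of `s`. Taking `|nc|` larger
than the uniform bound on support diameters contradicts locality.
-/

noncomputable section

/-- a Pauli operator modulo phase: finitely supported X- and Z-parts -/
abbrev PauliF (Q0 : Type*) := (ℤ × Q0) →₀ (ZMod 2 × ZMod 2)

/-- the symplectic form: `0` iff the two Paulis commute -/
def omegaF {Q0 : Type*} (p q : PauliF Q0) : ZMod 2 :=
  p.sum fun u v => v.1 * (q u).2 + v.2 * (q u).1

/-- the commutant (within the Pauli group modulo phase) of the set `S` -/
def CommutantF {Q0 : Type*} (S : Set (PauliF Q0)) : Set (PauliF Q0) :=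
  {p | ∀ s ∈ S, omegaF p s = 0}

/-- translation by `m` along the 1D direction -/
noncomputable def shiftF {Q0 : Type*} (m : ℤ) (p : PauliF Q0) : PauliF Q0 :=
  Finsupp.mapDomain (fun u => (u.1 + m, u.2)) p

section Symplectic

variable {Q0 : Type*}

theorem omegaF_single (u : ℤ × Q0) (v : ZMod 2 × ZMod 2) (s : PauliF Q0) :
    omegaF (Finsupp.single u v) s = v.1 * (s u).2 + v.2 * (s u).1 :=
  Finsupp.sum_single_index (by simp)

theorem omegaF_add (p q s : PauliF Q0) : omegaF (p + q) s = omegaF p s + omegaF q s := by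
  refine Finsupp.sum_add_index' (fun _ => by simp) fun _ _ _ => ?_
  simp only [Prod.fst_add, Prod.snd_add]
  ring

theorem mem_support_of_omegaF_single_ne_zero {u : ℤ × Q0} {v : ZMod 2 × ZMod 2} {s : PauliF Q0}
    (h : omegaF (Finsupp.single u v) s ≠ 0) : u ∈ s.support := by
  rw [Finsupp.mem_support_iff]
  intro hu
  simp [omegaF_single, hu] at h

theorem omegaF_eq_of_omegaF_add_eq_zero {p q s : PauliF Q0} (h : omegaF (p + q) s = 0) :
    omegaF p s = omegaF q s := by
  rwa [omegaF_add, CharTwo.add_eq_zero] at h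

end Symplectic

theorem Int.exists_lt_abs_mul {c : ℤ} (hc : c ≠ 0) (D : ℤ) : ∃ n : ℤ, D < |n * c| := by
  refine ⟨|D| + 1, ?_⟩
  rw [abs_mul, abs_of_pos (by positivity : 0 < |D| + 1)]
  calc D < |D| + 1 := by linarith [le_abs_self D]
    _ ≤ (|D| + 1) * |c| := le_mul_of_one_le_right (by positivity) (Int.one_le_abs hc)

theorem stmt_15_general {Q0 : Type*}
    (S : Set (PauliF Q0)) (D : ℤ)
    -- S is locally generated: uniformly bounded support diameters
    (hbdd : ∀ s ∈ S, ∀ u ∈ s.support, ∀ u' ∈ s.support, |u.1 - u'.1| ≤ D)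
    (x : ℤ × Q0) (c : ℤ) (hc : c ≠ 0)
    -- Z_x Z_{x+nc} lies in the commutant B = C A C† for every n
    (hZZ : ∀ n : ℤ,
      Finsupp.single x ((0 : ZMod 2), (1 : ZMod 2)) +
        Finsupp.single (x.1 + n * c, x.2) ((0 : ZMod 2), (1 : ZMod 2)) ∈ CommutantF S) :
    Finsupp.single x ((0 : ZMod 2), (1 : ZMod 2)) ∈ CommutantF S := by
  intro s hs
  obtain ⟨n, hn⟩ := Int.exists_lt_abs_mul hc D
  by_contra hx
  have hy := omegaF_eq_of_omegaF_add_eq_zero (hZZ n s hs) ▸ hx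
  have hdiam := hbdd s hs x (mem_support_of_omegaF_single_ne_zero hx) _
    (mem_support_of_omegaF_single_ne_zero hy)
  rw [sub_add_cancel_left, abs_neg] at hdiam
  exact hdiam.not_gt hn

theorem stmt_15 {Q0 : Type*} [Fintype Q0] [DecidableEq Q0]
    (S : Set (PauliF Q0)) (D : ℤ)
    -- S is locally generated: uniformly bounded support diameters
    (hbdd : ∀ s ∈ S, ∀ u ∈ s.support, ∀ u' ∈ s.support, |u.1 - u'.1| ≤ D)
    -- S is translation invariant
    (hTI : ∀ m : ℤ, ∀ s ∈ S, shiftF m s ∈ S)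
    (x : ℤ × Q0) (c : ℤ) (hc : c ≠ 0)
    -- Z_x Z_{x+nc} lies in the commutant B = C A C† for every n
    (hZZ : ∀ n : ℤ,
      Finsupp.single x ((0 : ZMod 2), (1 : ZMod 2)) +
        Finsupp.single (x.1 + n * c, x.2) ((0 : ZMod 2), (1 : ZMod 2)) ∈ CommutantF S) :
    Finsupp.single x ((0 : ZMod 2), (1 : ZMod 2)) ∈ CommutantF S :=
  stmt_15_general S D hbdd x c hc hZZ

end
end

section
/- Squares of the three-fermion disentangler are symmetric circuits: if U_dis = Σ_z Π_z ⊗ U^mat_z with U^mat_z = U^mat_{-z}, and (U^mat_z)² is a circuit C_z of range O(1) that admits a decomposition C_z = C⁽⁰⁾_z C⁽¹⁾_z C⁽²⁾_z C⁽³⁾_z into four rounds of nonoverlapping gates, each gate supported on a single k-cell and determined only by the spins in the open star of that cell (hence invariant under z ↦ −z), then U_dis² = Σ_z Π_z ⊗ (U^mat_z)² is a quantum circuit of depth 4 all of whose gates commute with the global Z₂ symmetry X (product of Pauli X on spins). Combined with the fact that U ⊗ U† is a symmetric circuit for any symmetric U, it follows that U_dis ⊗ U_dis is a quantum circuit of Z₂-symmetric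 gates. -/
/-!
STATEMENT 19: squares of the three-fermion disentangler are symmetric circuits.  If
`U_dis = Σ_z Π_z ⊗ U^mat_z` with `U^mat_z = U^mat_{-z}`, and `(U^mat_z)²` admits a
decomposition into four rounds of nonoverlapping gates, each gate supported on a single
`k`-cell and determined only by the spins in the open star of that cell (hence invariant
under `z ↦ -z`), then `U_dis² = Σ_z Π_z ⊗ (U^mat_z)²` is a quantum circuit of depth 4 all
of whose gates commute with the global `Z₂` symmetry `X`.  Combined with the fact that
`U ⊗ U†` is a symmetric circuit for any symmetric `U` (taken as given), it follows that
`U_dis ⊗ U_dis` is a quantum circuit of `Z₂`-symmetric gates.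
-/
noncomputable section

open Matrix

/-- `W` is a single round of gates: a product of unitary gates on pairwise disjoint
regions of diameter at most `r`, each gate satisfying the predicate `P`. -/
def IsRound {K : Type*} [Fintype K] [DecidableEq K] (d : K → K → ℝ) (r : ℝ)
    (P : Op K → Prop) (W : Op K) : Prop :=
  ∃ (n : ℕ) (T : Fin n → Set K) (g : Fin n → Op K),
    (∀ a b, a ≠ b → Disjoint (T a) (T b)) ∧
    (∀ a, SupportedOn (g a) (T a)) ∧
    (∀ a, ∀ x ∈ T a, ∀ y ∈ T a, d x y ≤ r) ∧
    (∀ a, g a ∈ unitary (Op K) ∧ P (g a)) ∧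
    W = (List.ofFn g).prod

/-- `W` is a quantum circuit of depth `depth` whose gates have range at most `r`
and satisfy the predicate `P`. -/
def IsCircuit {K : Type*} [Fintype K] [DecidableEq K] (d : K → K → ℝ) (r : ℝ)
    (depth : ℕ) (P : Op K → Prop) (W : Op K) : Prop :=
  ∃ rounds : Fin depth → Op K, (∀ k, IsRound d r P (rounds k)) ∧
    W = (List.ofFn rounds).prod
variable {S Mi : Type*} [Fintype S] [DecidableEq S] [Fintype Mi] [DecidableEq Mi]

/-- flip all the spin bits, leaving the material unchanged -/
def spinFlipConf {S Mi : Type*} (a : (S ⊕ Mi) → Bool) : (S ⊕ Mi) → Bool :=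
  fun k => match k with
  | Sum.inl s => !(a (Sum.inl s))
  | Sum.inr m => a (Sum.inr m)

/-- the global `Z₂` symmetry: the product of Pauli `X` over all spins -/
def Xspins {S Mi : Type*} [Fintype S] [DecidableEq S] [Fintype Mi] [DecidableEq Mi] :
    Op (S ⊕ Mi) :=
  fun a b => if b = spinFlipConf a then 1 else 0

/-- the metric on the doubled lattice -/
def ddist {K : Type*} (d : K → K → ℝ) : (K ⊕ K) → (K ⊕ K) → ℝ :=
  fun x y => d (Sum.elim id id x) (Sum.elim id id y)

/-- `A ⊗ B` on two copies of the lattice `K` -/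
def tensK {K : Type*} [Fintype K] [DecidableEq K] (A B : Op K) : Op (K ⊕ K) :=
  fun a b => A (fun i => a (Sum.inl i)) (fun i => b (Sum.inl i)) *
    B (fun i => a (Sum.inr i)) (fun i => b (Sum.inr i))

/-
Controlling, `V ↦ Σ_z Π_z ⊗ V_z`, is the block-diagonal embedding up to a reindexing, hence a
star-monoid homomorphism out of the spin-indexed families of material operators. So
`U_dis² = controlled ((U^mat)²)` factors, round by round, into the controlled gates
`Σ_z Π_z ⊗ G_c(z)`. Each is unitary, supported on the open star of its cell together with the
cell (as `G_c(z)` only reads the spins there), and commutes with the spin flip because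
`G_c(z) = G_c(-z)`. For the doubled system, unitarity gives `U ⊗ U = (U ⊗ U†)(1 ⊗ U²)`, and
`1 ⊗ ·` carries the symmetric circuit for `U²` to a symmetric circuit on the second copy.
-/

open scoped Kronecker

def spinMaterialEquiv : ((S ⊕ Mi) → Bool) ≃ (Mi → Bool) × (S → Bool) :=
  (Equiv.sumArrowEquivProdArrow S Mi Bool).trans (Equiv.prodComm _ _)

theorem controlled_eq_submatrix_blockDiagonal (V : (S → Bool) → Op Mi) :
    controlled V = (blockDiagonal V).submatrix spinMaterialEquiv spinMaterialEquiv := rfl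

def controlledHom : ((S → Bool) → Op Mi) →⋆* Op (S ⊕ Mi) where
  toFun := controlled
  map_one' := by
    rw [controlled_eq_submatrix_blockDiagonal, blockDiagonal_one, submatrix_one_equiv]
  map_mul' V W := by
    simp only [controlled_eq_submatrix_blockDiagonal, Pi.mul_def, blockDiagonal_mul,
      submatrix_mul_equiv]
  map_star' V := by
    simp only [controlled_eq_submatrix_blockDiagonal, star_eq_conjTranspose,
      conjTranspose_submatrix, blockDiagonal_conjTranspose]
    rfl

theorem controlled_mul (V W : (S → Bool) → Op Mi) :
    controlled (V * W) = controlled V * controlled W :=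
  map_mul controlledHom V W

theorem controlled_list_prod (l : List ((S → Bool) → Op Mi)) :
    controlled l.prod = (l.map controlled).prod :=
  map_list_prod controlledHom l

theorem controlled_mem_unitary {V : (S → Bool) → Op Mi} (hV : ∀ z, V z ∈ unitary (Op Mi)) :
    controlled V ∈ unitary (Op (S ⊕ Mi)) :=
  Unitary.map_mem controlledHom <| Unitary.mem_iff.2
    ⟨funext fun z => (Unitary.mem_iff.1 (hV z)).1, funext fun z => (Unitary.mem_iff.1 (hV z)).2⟩

theorem spinFlipConf_involutive {S Mi : Type*} :
    Function.Involutive (spinFlipConf (S := S) (Mi := Mi)) := by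
  intro a
  funext k
  cases k <;> simp [spinFlipConf]

def spinFlip {S Mi : Type*} : Equiv.Perm ((S ⊕ Mi) → Bool) :=
  Function.Involutive.toPerm _ spinFlipConf_involutive

theorem Xspins_eq_toMatrix_spinFlip :
    (Xspins : Op (S ⊕ Mi)) = (spinFlip (S := S) (Mi := Mi)).toPEquiv.toMatrix := by
  ext a b
  simp [Xspins, spinFlip, eq_comm]

theorem commute_Xspins_iff {g : Op (S ⊕ Mi)} :
    Commute g Xspins ↔ ∀ a b, g a (spinFlipConf b) = g (spinFlipConf a) b := by
  rw [Xspins_eq_toMatrix_spinFlip, Commute, SemiconjBy, PEquiv.mul_toMatrix_toPEquiv,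
    PEquiv.toMatrix_toPEquiv_mul, spinFlip, Function.Involutive.toPerm_symm]
  exact Matrix.ext_iff.symm

theorem controlled_commute_Xspins {V : (S → Bool) → Op Mi}
    (hV : ∀ z, V z = V (fun s => !(z s))) : Commute (controlled V) Xspins := by
  rw [commute_Xspins_iff]
  intro a b
  have hspins : ((fun s => a (Sum.inl s)) = fun s => !(b (Sum.inl s))) ↔
      ((fun s => !(a (Sum.inl s))) = fun s => b (Sum.inl s)) := by
    simp only [funext_iff, Bool.eq_not_iff, Bool.not_eq_eq_eq_not]
  simp only [controlled, spinFlipConf, hspins, ← hV]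

theorem inl_mem_image_union_iff {S Mi : Type*} {A : Set S} {B : Set Mi} {s : S} :
    (Sum.inl s : S ⊕ Mi) ∈ Sum.inl '' A ∪ Sum.inr '' B ↔ s ∈ A := by
  simp

theorem inr_mem_image_union_iff {S Mi : Type*} {A : Set S} {B : Set Mi} {m : Mi} :
    (Sum.inr m : S ⊕ Mi) ∈ Sum.inl '' A ∪ Sum.inr '' B ↔ m ∈ B := by
  simp

theorem supportedOn_controlled {A : Set S} {B : Set Mi} {V : (S → Bool) → Op Mi}
    (hdep : ∀ z z', (∀ s ∈ A, z s = z' s) → V z = V z')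
    (hsupp : ∀ z, SupportedOn (V z) B) :
    SupportedOn (controlled V) (Sum.inl '' A ∪ Sum.inr '' B) := by
  constructor
  · intro a b hab k hk
    by_cases hspins : (fun s => a (Sum.inl s)) = fun s => b (Sum.inl s)
    · rw [controlled, if_pos hspins] at hab
      cases k with
      | inl s => exact congrFun hspins s
      | inr m => exact (hsupp _).1 _ _ hab m (mt inr_mem_image_union_iff.2 hk)
    · exact absurd (if_neg hspins) hab
  · intro a b a' b' haa' hbb' hab ha'b'
    -- off `A` both spin pairs agree, on `A` they are the same pair
    have hspins : ((fun s => a (Sum.inl s)) = fun s => b (Sum.inl s)) ↔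
        ((fun s => a' (Sum.inl s)) = fun s => b' (Sum.inl s)) := by
      simp only [funext_iff]
      refine forall_congr' fun s => ?_
      by_cases hs : s ∈ A
      · rw [haa' _ (inl_mem_image_union_iff.2 hs), hbb' _ (inl_mem_image_union_iff.2 hs)]
      · simp only [hab _ (mt inl_mem_image_union_iff.1 hs),
          ha'b' _ (mt inl_mem_image_union_iff.1 hs)]
    simp only [controlled, hspins]
    split_ifs
    · rw [hdep _ (fun s => a' (Sum.inl s)) fun s hs => haa' _ (inl_mem_image_union_iff.2 hs)]
      exact (hsupp _).2 _ _ _ _ (fun m hm => haa' _ (inr_mem_image_union_iff.2 hm))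
        (fun m hm => hbb' _ (inr_mem_image_union_iff.2 hm))
        (fun m hm => hab _ (mt inr_mem_image_union_iff.1 hm))
        (fun m hm => ha'b' _ (mt inr_mem_image_union_iff.1 hm))
    · rfl

section Tensor

variable {K : Type*} [Fintype K] [DecidableEq K]

theorem tensK_eq_submatrix_kronecker (A B : Op K) :
    tensK A B = (A ⊗ₖ B).submatrix (Equiv.sumArrowEquivProdArrow K K Bool)
      (Equiv.sumArrowEquivProdArrow K K Bool) := rfl

theorem tensK_mul_tensK (A B C D : Op K) :
    tensK A B * tensK C D = tensK (A * C) (B * D) := by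
  simp only [tensK_eq_submatrix_kronecker, submatrix_mul_equiv, mul_kronecker_mul]

theorem Commute.tensK {A B C D : Op K}
    (hAC : Commute A C) (hBD : Commute B D) : Commute (tensK A B) (tensK C D) := by
  rw [Commute, SemiconjBy, tensK_mul_tensK, tensK_mul_tensK, hAC.eq, hBD.eq]

theorem tensK_one_eq_controlled (B : Op K) : tensK 1 B = controlled (fun _ : K → Bool => B) := by
  ext a b
  simp only [tensK, controlled, one_apply]
  split_ifs <;> simp

theorem tensK_one_list_prod (l : List (Op K)) :
    tensK 1 l.prod = (l.map (tensK 1)).prod := by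
  induction l with
  | nil => rw [tensK_one_eq_controlled]; exact map_one controlledHom
  | cons B l ih =>
    rw [List.prod_cons, List.map_cons, List.prod_cons, ← ih, tensK_mul_tensK, one_mul]

end Tensor

section Circuits

variable {K : Type*} [Fintype K] [DecidableEq K] {d : K → K → ℝ} {r r' : ℝ}
  {P : Op K → Prop}

theorem IsRound.mono {W : Op K} (h : IsRound d r P W) (hr : r ≤ r') : IsRound d r' P W := by
  obtain ⟨n, T, g, hdisj, hsupp, hsize, hgate, rfl⟩ := h
  exact ⟨n, T, g, hdisj, hsupp, fun a x hx y hy => (hsize a x hx y hy).trans hr, hgate, rfl⟩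

theorem IsCircuit.mono {n : ℕ} {W : Op K} (h : IsCircuit d r n P W) (hr : r ≤ r') :
    IsCircuit d r' n P W := by
  obtain ⟨rounds, hrounds, rfl⟩ := h
  exact ⟨rounds, fun k => (hrounds k).mono hr, rfl⟩

theorem IsCircuit.mul {n₁ n₂ : ℕ} {W₁ W₂ : Op K} (h₁ : IsCircuit d r n₁ P W₁)
    (h₂ : IsCircuit d r n₂ P W₂) : IsCircuit d r (n₁ + n₂) P (W₁ * W₂) := by
  obtain ⟨R₁, hR₁, rfl⟩ := h₁
  obtain ⟨R₂, hR₂, rfl⟩ := h₂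
  refine ⟨Fin.append R₁ R₂, Fin.addCases (by simpa using hR₁) (by simpa using hR₂), ?_⟩
  rw [List.ofFn_fin_append, List.prod_append]

theorem isRound_prod_toList {ι : Type*} [Fintype ι] (T : ι → Set K) (g : ι → Op K)
    (hdisj : ∀ i j, i ≠ j → Disjoint (T i) (T j)) (hsupp : ∀ i, SupportedOn (g i) (T i))
    (hsize : ∀ i, ∀ x ∈ T i, ∀ y ∈ T i, d x y ≤ r)
    (hgate : ∀ i, g i ∈ unitary (Op K) ∧ P (g i)) :
    IsRound d r P ((Finset.univ : Finset ι).toList.map g).prod := by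
  set l := (Finset.univ : Finset ι).toList
  refine ⟨l.length, T ∘ l.get, g ∘ l.get,
    fun a b hab => hdisj _ _ fun h => hab ((Finset.nodup_toList _).get_inj_iff.1 h),
    fun a => hsupp _, fun a => hsize _, fun a => hgate _, ?_⟩
  rw [← List.map_ofFn, List.ofFn_get]

end Circuits

section Doubling

variable {K : Type*} [Fintype K] [DecidableEq K] {d : K → K → ℝ} {r : ℝ}
  {P : Op K → Prop} {Q : Op (K ⊕ K) → Prop}

theorem IsRound.tensK_one {W : Op K} (h : IsRound d r P W)
    (hPQ : ∀ g, P g → Q (tensK 1 g)) : IsRound (ddist d) r Q (tensK 1 W) := by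
  obtain ⟨n, T, g, hdisj, hsupp, hsize, hgate, rfl⟩ := h
  refine ⟨n, fun a => Sum.inr '' T a, fun a => tensK 1 (g a),
    fun a b hab => (Set.disjoint_image_iff Sum.inr_injective).2 (hdisj a b hab),
    fun a => ?_, ?_, fun a => ?_, ?_⟩
  · simpa [tensK_one_eq_controlled] using
      supportedOn_controlled (A := (∅ : Set K)) (fun _ _ _ => rfl) fun _ => hsupp a
  · rintro a _ ⟨x, hx, rfl⟩ _ ⟨y, hy, rfl⟩
    exact hsize a x hx y hy
  · refine ⟨?_, hPQ _ (hgate a).2⟩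
    simpa only [tensK_one_eq_controlled] using controlled_mem_unitary fun _ => (hgate a).1
  · rw [tensK_one_list_prod, List.map_ofFn]
    rfl

theorem IsCircuit.tensK_one {n : ℕ} {W : Op K} (h : IsCircuit d r n P W)
    (hPQ : ∀ g, P g → Q (tensK 1 g)) : IsCircuit (ddist d) r n Q (tensK 1 W) := by
  obtain ⟨rounds, hrounds, rfl⟩ := h
  refine ⟨fun k => tensK 1 (rounds k), fun k => (hrounds k).tensK_one hPQ, ?_⟩
  rw [tensK_one_list_prod, List.map_ofFn]
  rfl

end Doubling

theorem stmt_19_general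
    {Cell : Fin 4 → Type} [∀ k, Fintype (Cell k)]
    (d : (S ⊕ Mi) → (S ⊕ Mi) → ℝ) (r : ℝ)
    (Umat : (S → Bool) → Op Mi)
    (hunit : ∀ z, Umat z ∈ unitary (Op Mi))
    (reg : ∀ k, Cell k → Set Mi) (starSp : ∀ k, Cell k → Set S)
    (G : ∀ k, Cell k → (S → Bool) → Op Mi)
    -- each gate depends only on the spins in the open star of its cell …
    (hdep : ∀ k c (z z' : S → Bool), (∀ s ∈ starSp k c, z s = z' s) → G k c z = G k c z')
    -- … is invariant under flipping all spins …
    (hGsym : ∀ k c (z : S → Bool), G k c z = G k c (fun s => !(z s)))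
    -- … is a unitary supported on its cell …
    (hGsupp : ∀ k c (z : S → Bool), SupportedOn (G k c z) (reg k c))
    (hGunit : ∀ k c (z : S → Bool), G k c z ∈ unitary (Op Mi))
    -- … the gates of one round are nonoverlapping …
    (hdisj : ∀ k, ∀ c c' : Cell k, c ≠ c' →
      Disjoint ((Sum.inl '' starSp k c ∪ Sum.inr '' reg k c : Set (S ⊕ Mi)))
               ((Sum.inl '' starSp k c' ∪ Sum.inr '' reg k c' : Set (S ⊕ Mi))))
    -- … and have range at most r
    (hsize : ∀ k c, ∀ x ∈ (Sum.inl '' starSp k c ∪ Sum.inr '' reg k c : Set (S ⊕ Mi)),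
      ∀ y ∈ (Sum.inl '' starSp k c ∪ Sum.inr '' reg k c : Set (S ⊕ Mi)), d x y ≤ r)
    -- the decomposition (U^mat_z)² = C⁽⁰⁾_z C⁽¹⁾_z C⁽²⁾_z C⁽³⁾_z into four rounds
    (hdecomp : ∀ z, Umat z * Umat z =
      (List.ofFn (fun k : Fin 4 =>
        ((Finset.univ : Finset (Cell k)).toList.map (fun c => G k c z)).prod)).prod)
    -- the symmetric-circuit decomposition of U ⊗ U† via conjugated SWAPs, taken as given
    (hdouble : ∃ (r2 : ℝ) (dep2 : ℕ),
      IsCircuit (ddist d) r2 dep2 (fun g => Commute g (tensK Xspins Xspins))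
        (tensK (controlled Umat) (star (controlled Umat)))) :
    -- U_dis² is a depth-4 circuit of gates commuting with the Z₂ symmetry X …
    IsCircuit d r 4 (fun g => Commute g Xspins) (controlled Umat * controlled Umat) ∧
    -- … and hence U_dis ⊗ U_dis is a quantum circuit of Z₂-symmetric gates
    (∃ (r2 : ℝ) (dep2 : ℕ),
      IsCircuit (ddist d) r2 dep2 (fun g => Commute g (tensK Xspins Xspins))
        (tensK (controlled Umat) (controlled Umat))) := by
  have hsquare : Umat * Umat =
      (List.ofFn fun k => ((Finset.univ : Finset (Cell k)).toList.map (G k)).prod).prod := by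
    funext z
    simp only [Pi.mul_apply, hdecomp z, Pi.list_prod_apply, List.map_ofFn, Function.comp_def,
      List.map_map]
  have hcircuit : IsCircuit d r 4 (fun g => Commute g Xspins)
      (controlled Umat * controlled Umat) := by
    refine ⟨_, fun k => isRound_prod_toList _ (fun c => controlled (G k c)) (hdisj k)
      (fun c => supportedOn_controlled (hdep k c) (hGsupp k c)) (hsize k)
      fun c => ⟨controlled_mem_unitary (hGunit k c), controlled_commute_Xspins (hGsym k c)⟩,
      ?_⟩
    rw [← controlled_mul, hsquare, controlled_list_prod, List.map_ofFn]
    simp only [Function.comp_def, controlled_list_prod, List.map_map]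
  obtain ⟨r2, dep2, hdouble⟩ := hdouble
  have hU := controlled_mem_unitary hunit
  refine ⟨hcircuit, max r2 r, dep2 + 4, ?_⟩
  have hfactor : tensK (controlled Umat) (star (controlled Umat)) *
      tensK 1 (controlled Umat * controlled Umat) = tensK (controlled Umat) (controlled Umat) := by
    rw [tensK_mul_tensK, mul_one, ← mul_assoc, Unitary.star_mul_self_of_mem hU, one_mul]
  rw [← hfactor]
  have hlift : IsCircuit (ddist d) r 4 (fun g => Commute g (tensK Xspins Xspins))
      (tensK 1 (controlled Umat * controlled Umat)) :=
    hcircuit.tensK_one fun _ hg => (Commute.one_left _).tensK hg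
  exact (hdouble.mono (le_max_left r2 r)).mul (hlift.mono (le_max_right r2 r))

theorem stmt_19
    {Cell : Fin 4 → Type} [∀ k, Fintype (Cell k)] [∀ k, DecidableEq (Cell k)]
    (d : (S ⊕ Mi) → (S ⊕ Mi) → ℝ) (r : ℝ)
    (Umat : (S → Bool) → Op Mi)
    (hunit : ∀ z, Umat z ∈ unitary (Op Mi))
    (hUsym : ∀ z, Umat z = Umat (fun s => !(z s)))
    (reg : ∀ k, Cell k → Set Mi) (starSp : ∀ k, Cell k → Set S)
    (G : ∀ k, Cell k → (S → Bool) → Op Mi)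
    -- each gate depends only on the spins in the open star of its cell …
    (hdep : ∀ k c (z z' : S → Bool), (∀ s ∈ starSp k c, z s = z' s) → G k c z = G k c z')
    -- … is invariant under flipping all spins …
    (hGsym : ∀ k c (z : S → Bool), G k c z = G k c (fun s => !(z s)))
    -- … is a unitary supported on its cell …
    (hGsupp : ∀ k c (z : S → Bool), SupportedOn (G k c z) (reg k c))
    (hGunit : ∀ k c (z : S → Bool), G k c z ∈ unitary (Op Mi))
    -- … the gates of one round are nonoverlapping …
    (hdisj : ∀ k, ∀ c c' : Cell k, c ≠ c' →
      Disjoint ((Sum.inl '' starSp k c ∪ Sum.inr '' reg k c : Set (S ⊕ Mi)))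
               ((Sum.inl '' starSp k c' ∪ Sum.inr '' reg k c' : Set (S ⊕ Mi))))
    -- … and have range at most r
    (hsize : ∀ k c, ∀ x ∈ (Sum.inl '' starSp k c ∪ Sum.inr '' reg k c : Set (S ⊕ Mi)),
      ∀ y ∈ (Sum.inl '' starSp k c ∪ Sum.inr '' reg k c : Set (S ⊕ Mi)), d x y ≤ r)
    -- the decomposition (U^mat_z)² = C⁽⁰⁾_z C⁽¹⁾_z C⁽²⁾_z C⁽³⁾_z into four rounds
    (hdecomp : ∀ z, Umat z * Umat z =
      (List.ofFn (fun k : Fin 4 =>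
        ((Finset.univ : Finset (Cell k)).toList.map (fun c => G k c z)).prod)).prod)
    -- the symmetric-circuit decomposition of U ⊗ U† via conjugated SWAPs, taken as given
    (hdouble : ∃ (r2 : ℝ) (dep2 : ℕ),
      IsCircuit (ddist d) r2 dep2 (fun g => Commute g (tensK Xspins Xspins))
        (tensK (controlled Umat) (star (controlled Umat)))) :
    -- U_dis² is a depth-4 circuit of gates commuting with the Z₂ symmetry X …
    IsCircuit d r 4 (fun g => Commute g Xspins) (controlled Umat * controlled Umat) ∧
    -- … and hence U_dis ⊗ U_dis is a quantum circuit of Z₂-symmetric gates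
    (∃ (r2 : ℝ) (dep2 : ℕ),
      IsCircuit (ddist d) r2 dep2 (fun g => Commute g (tensK Xspins Xspins))
        (tensK (controlled Umat) (controlled Umat))) :=
  stmt_19_general d r Umat hunit reg starSp G hdep hGsym hGsupp hGunit hdisj hsize hdecomp hdouble

end
end
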